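/- arXiv:2001.06743 — 3 statements merged into one kernel-verified Lean document; each statement's English description precedes it below -/
import Mathlib

section
/- Let x = (s_x, i_x) ∈ ℝ² and p₀, p₁ > 0 with p₀ + p₁ < 1. Define I_ini(x) = sup over y = (s_y, i_y) ∈ ℝ² of [s_y·s_x + i_y·i_x − log(1 − p₀ − p₁ + e^{s_y}p₀ + e^{i_y}p₁)]. If s_x > 0, i_x > 0 and s_x + i_x < 1, then I_ini(x) = s_x·log(s_x/p₀) + i_x·log(i_x/p₁) + (1 − s_x − i_x)·log((1 − s_x − i_x)/(1 − p₀ − p₁)). -/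
/-!
With `q = (sx, ix, 1 - sx - ix)`, `p = (p₀, p₁, 1 - p₀ - p₁)` and `w = (e^sy, e^iy, 1)`, the
objective is `∑ qᵢ log wᵢ - log ∑ pᵢ wᵢ`. Jensen's inequality for `log`, with weights `qᵢ` at the
points `pᵢ wᵢ / qᵢ`, bounds it by the relative entropy `∑ qᵢ log (qᵢ / pᵢ)`, and the bound is
attained exactly when `w` is proportional to `q / p`; choosing the constant that makes the last
coordinate `1` gives the optimal `(sy, iy)`.
-/

open Real Finset

section GibbsVariational

variable {ι : Type*} [Fintype ι] {q p : ι → ℝ}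

theorem sum_mul_log_sub_log_sum_le_sum_mul_log_div {w : ι → ℝ} (hq : ∀ i, 0 < q i)
    (hq1 : ∑ i, q i = 1) (hp : ∀ i, 0 < p i) (hw : ∀ i, 0 < w i) :
    ∑ i, q i * log (w i) - log (∑ i, p i * w i) ≤ ∑ i, q i * log (q i / p i) := by
  have jensen := strictConcaveOn_log_Ioi.concaveOn.le_map_sum (t := univ) (w := q)
    (p := fun i ↦ p i * w i / q i) (fun i _ ↦ (hq i).le) hq1
    (fun i _ ↦ div_pos (mul_pos (hp i) (hw i)) (hq i))
  have hmean : ∑ i, q i * (p i * w i / q i) = ∑ i, p i * w i :=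
    sum_congr rfl fun i _ ↦ mul_div_cancel₀ _ (hq i).ne'
  have hlog : ∀ i, log (p i * w i / q i) = log (w i) - log (q i / p i) := fun i ↦ by
    rw [← log_div (hw i).ne' (div_pos (hq i) (hp i)).ne']
    congr 1
    field_simp
  simp only [smul_eq_mul] at jensen
  rw [hmean] at jensen
  simp only [hlog, mul_sub, sum_sub_distrib] at jensen
  linarith

theorem sum_mul_log_sub_log_sum_mul_div_eq (hq : ∀ i, 0 < q i) (hq1 : ∑ i, q i = 1)
    (hp : ∀ i, 0 < p i) {a : ℝ} (ha : 0 < a) :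
    ∑ i, q i * log (a * (q i / p i)) - log (∑ i, p i * (a * (q i / p i)))
      = ∑ i, q i * log (q i / p i) := by
  have hsum : ∑ i, p i * (a * (q i / p i)) = a :=
    calc ∑ i, p i * (a * (q i / p i)) = ∑ i, a * q i :=
          sum_congr rfl fun i _ ↦ by field_simp [(hp i).ne']
      _ = a := by rw [← mul_sum, hq1, mul_one]
  simp only [hsum, log_mul ha.ne' (div_pos (hq _) (hp _)).ne', mul_add, sum_add_distrib,
    ← sum_mul, hq1, one_mul, add_sub_cancel_left]

end GibbsVariational

theorem trinomial_objective_eq_sum (p₀ p₁ sx ix sy iy : ℝ) :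
    sy * sx + iy * ix - log (1 - p₀ - p₁ + exp sy * p₀ + exp iy * p₁)
      = ∑ i : Fin 3, ![sx, ix, 1 - sx - ix] i * log (![exp sy, exp iy, 1] i)
        - log (∑ i : Fin 3, ![p₀, p₁, 1 - p₀ - p₁] i * ![exp sy, exp iy, 1] i) := by
  simp only [Fin.sum_univ_three, Fin.isValue, Matrix.cons_val_zero, Matrix.cons_val_one,
    Matrix.cons_val, log_exp, log_one, mul_zero, add_zero, mul_one]
  ring_nf

theorem stmt0 (p₀ p₁ sx ix : ℝ)
    (hp₀ : 0 < p₀) (hp₁ : 0 < p₁) (hp : p₀ + p₁ < 1)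
    (hsx : 0 < sx) (hix : 0 < ix) (hx : sx + ix < 1) :
    sSup {v : ℝ | ∃ sy iy : ℝ,
        v = sy * sx + iy * ix
          - Real.log (1 - p₀ - p₁ + Real.exp sy * p₀ + Real.exp iy * p₁)}
      = sx * Real.log (sx / p₀) + ix * Real.log (ix / p₁)
        + (1 - sx - ix) * Real.log ((1 - sx - ix) / (1 - p₀ - p₁)) := by
  have hc : 0 < 1 - p₀ - p₁ := by linarith
  have ht : 0 < 1 - sx - ix := by linarith
  set q : Fin 3 → ℝ := ![sx, ix, 1 - sx - ix]
  set p : Fin 3 → ℝ := ![p₀, p₁, 1 - p₀ - p₁]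
  have hq : ∀ i, 0 < q i := by intro i; fin_cases i <;> assumption
  have hp : ∀ i, 0 < p i := by intro i; fin_cases i <;> assumption
  have hq1 : ∑ i, q i = 1 := by simp [q, Fin.sum_univ_three]
  have hentropy : sx * log (sx / p₀) + ix * log (ix / p₁)
      + (1 - sx - ix) * log ((1 - sx - ix) / (1 - p₀ - p₁)) = ∑ i, q i * log (q i / p i) := by
    simp [q, p, Fin.sum_univ_three]
  rw [hentropy]
  refine IsGreatest.csSup_eq ⟨?_, ?_⟩
  · set a := (1 - p₀ - p₁) / (1 - sx - ix)
    have ha : 0 < a := div_pos hc ht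
    have hw : ![exp (log (a * (sx / p₀))), exp (log (a * (ix / p₁))), 1]
        = fun i ↦ a * (q i / p i) := by
      funext i
      fin_cases i
      · exact exp_log (by positivity)
      · exact exp_log (by positivity)
      · simp [q, p, a, field]
    refine ⟨log (a * (sx / p₀)), log (a * (ix / p₁)), ?_⟩
    rw [trinomial_objective_eq_sum, hw, sum_mul_log_sub_log_sum_mul_div_eq hq hq1 hp ha]
  · rintro v ⟨sy, iy, rfl⟩
    rw [trinomial_objective_eq_sum]
    refine sum_mul_log_sub_log_sum_le_sum_mul_log_div hq hq1 hp fun i ↦ ?_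
    fin_cases i <;> simp [exp_pos]
end

section
/- Let p₀, p₁ > 0 with p₀ + p₁ < 1. For x, y ≥ 0 with x + y ≤ 1, the probability under the multinomial distribution that exactly ⌊nx⌋ of n i.i.d. trinomial trials (with outcome probabilities p₀, p₁, 1−p₀−p₁) land in the first class and ⌊ny⌋ in the second class satisfies: (1/n)·log of this probability converges as n → ∞ to −[x·log(x/p₀) + y·log(y/p₁) + (1−x−y)·log((1−x−y)/(1−p₀−p₁))], with the convention 0·log 0 = 0. -/
/-!
By Stirling's formula, `log m! = m log m - m + o(m)`, and the error stays `o(n)` when `m ≤ n`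
varies with `n`. Writing the probability as `n! / (a! b! c!) · p₀^a p₁^b p₂^c` with
`a + b + c = n`, the terms `m log n` cancel against `n log n`, and what remains of
`(1/n) log` is `-∑ t log t + ∑ t log p` evaluated at the frequencies `t = a/n, b/n, c/n`,
which converge to `x, y, 1 - x - y`; continuity of `t ↦ t log t` at `0` gives the convention
`0 log 0 = 0`.
-/

open Filter Topology Real Asymptotics
open scoped Nat

theorem Real.mul_log_div (x : ℝ) {y : ℝ} (hy : y ≠ 0) :
    x * log (x / y) = x * log x - x * log y := by
  rcases eq_or_ne x 0 with rfl | hx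
  · simp
  · rw [log_div hx hy]; ring

theorem Asymptotics.IsLittleO.comp_of_le_self {F : Type*} [SeminormedAddCommGroup F]
    {E : ℕ → F} (hE : E =o[atTop] (fun m : ℕ => (m : ℝ))) {a : ℕ → ℕ} (ha : ∀ n, a n ≤ n) :
    (fun n => E (a n)) =o[atTop] (fun n : ℕ => (n : ℝ)) := by
  refine IsLittleO.of_bound fun c hc => ?_
  obtain ⟨M, hM⟩ := eventually_atTop.mp (hE.bound hc)
  set K := ∑ m ∈ Finset.range M, ‖E m‖
  filter_upwards [(tendsto_natCast_atTop_atTop (R := ℝ)).eventually_ge_atTop (K / c)] with n hn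
  rw [Real.norm_natCast]
  rcases lt_or_ge (a n) M with hlt | hge
  · calc ‖E (a n)‖ ≤ K :=
          Finset.single_le_sum (f := fun m => ‖E m‖) (fun _ _ => norm_nonneg _)
            (Finset.mem_range.mpr hlt)
      _ ≤ c * n := (div_le_iff₀' hc).mp hn
  · calc ‖E (a n)‖ ≤ c * ‖(a n : ℝ)‖ := hM _ hge
      _ ≤ c * n := by rw [Real.norm_natCast]; gcongr; exact ha n

theorem log_factorial_sub_eq_log_stirlingSeq (m : ℕ) :
    log m ! - (m * log m - m) = log (Stirling.stirlingSeq m) + 1 / 2 * log (2 * m) := by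
  rw [Stirling.log_stirlingSeq_formula]
  rcases eq_or_ne m 0 with rfl | hm
  · simp
  · rw [log_div (by positivity) (exp_ne_zero 1), log_exp]
    ring

theorem isLittleO_log_factorial_sub :
    (fun m : ℕ => log m ! - (m * log m - m)) =o[atTop] (fun m : ℕ => (m : ℝ)) := by
  simp only [log_factorial_sub_eq_log_stirlingSeq]
  have hm : Tendsto (fun m : ℕ => ‖(m : ℝ)‖) atTop atTop := by
    simpa only [Real.norm_natCast] using tendsto_natCast_atTop_atTop
  refine IsLittleO.add ?_ ?_
  · have hS : Tendsto (fun m => log (Stirling.stirlingSeq m)) atTop (𝓝 (log √π)) :=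
      (continuousAt_log (by positivity)).tendsto.comp Stirling.tendsto_stirlingSeq_sqrt_pi
    exact hS.isBigO_one ℝ |>.trans_isLittleO ((isLittleO_one_left_iff ℝ).mpr hm)
  · have h2m : Tendsto (fun m : ℕ => 2 * (m : ℝ)) atTop atTop :=
      tendsto_natCast_atTop_atTop.const_mul_atTop two_pos
    refine IsLittleO.const_mul_left ?_ _
    exact (isLittleO_log_id_atTop.comp_tendsto h2m).trans_isBigO
      (isBigO_refl _ _ |>.const_mul_left 2)

theorem tendsto_log_factorial_sub_mul_log_div {a : ℕ → ℕ} (ha : ∀ n, a n ≤ n) {t : ℝ}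
    (hat : Tendsto (fun n => (a n : ℝ) / n) atTop (𝓝 t)) :
    Tendsto (fun n : ℕ => (log (a n)! - a n * log n) / n) atTop (𝓝 (t * log t - t)) := by
  have hE := (isLittleO_log_factorial_sub.comp_of_le_self ha).tendsto_div_nhds_zero
  have hlim := (((continuous_mul_log.tendsto t).comp hat).sub hat).add hE
  rw [add_zero] at hlim
  refine hlim.congr' ?_
  filter_upwards [eventually_ne_atTop 0] with n hn
  simp only [Function.comp_apply, div_mul_eq_mul_div, mul_log_div _ (Nat.cast_ne_zero.mpr hn)]
  ring

theorem Nat.choose_mul_choose_mul_factorial_mul {n a b : ℕ} (hab : a + b ≤ n) :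
    n.choose a * (n - a).choose b * (a ! * b ! * (n - a - b)!) = n ! := by
  rw [← Nat.choose_mul_factorial_mul_factorial (show a ≤ n by omega),
    ← Nat.choose_mul_factorial_mul_factorial (show b ≤ n - a by omega), Nat.sub_sub]
  ring

theorem log_trinomial_prob {n a b : ℕ} (hab : a + b ≤ n) {p₀ p₁ p₂ : ℝ} (hp₀ : 0 < p₀)
    (hp₁ : 0 < p₁) (hp₂ : 0 < p₂) :
    log ((n.choose a : ℝ) * ((n - a).choose b : ℝ) * p₀ ^ a * p₁ ^ b * p₂ ^ (n - a - b))
      = log n ! - log a ! - log b ! - log (n - a - b)!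
        + a * log p₀ + b * log p₁ + (n - a - b : ℕ) * log p₂ := by
  have hcoef : (n.choose a : ℝ) * ((n - a).choose b : ℝ) = n ! / (a ! * b ! * (n - a - b)!) := by
    rw [eq_div_iff (by positivity)]
    exact_mod_cast Nat.choose_mul_choose_mul_factorial_mul hab
  rw [hcoef, log_mul, log_mul, log_mul, log_div, log_mul, log_mul, log_pow, log_pow, log_pow]
  all_goals first | positivity | ring

theorem tendsto_log_trinomial_prob_div {p₀ p₁ p₂ : ℝ} (hp₀ : 0 < p₀) (hp₁ : 0 < p₁)
    (hp₂ : 0 < p₂) {a b : ℕ → ℕ} (hab : ∀ n, a n + b n ≤ n) {x y : ℝ}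
    (hax : Tendsto (fun n => (a n : ℝ) / n) atTop (𝓝 x))
    (hby : Tendsto (fun n => (b n : ℝ) / n) atTop (𝓝 y)) :
    Tendsto (fun n : ℕ => (n : ℝ)⁻¹ * log ((n.choose (a n) : ℝ) * ((n - a n).choose (b n) : ℝ)
        * p₀ ^ a n * p₁ ^ b n * p₂ ^ (n - a n - b n))) atTop
      (𝓝 (-(x * log (x / p₀) + y * log (y / p₁) + (1 - x - y) * log ((1 - x - y) / p₂)))) := by
  set c : ℕ → ℕ := fun n => n - a n - b n
  have hsum : ∀ n, (a n + b n + c n : ℝ) = n := fun n => by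
    have := hab n
    norm_cast
    show a n + b n + (n - a n - b n) = n
    omega
  have hcz : Tendsto (fun n => (c n : ℝ) / n) atTop (𝓝 (1 - x - y)) := by
    refine ((tendsto_const_nhds.sub hax).sub hby).congr' ?_
    filter_upwards [eventually_ne_atTop 0] with n hn
    have := hsum n
    field_simp
    linarith
  have hn1 : Tendsto (fun n : ℕ => (n : ℝ) / n) atTop (𝓝 1) :=
    tendsto_const_nhds.congr' <| (eventually_ne_atTop 0).mono fun n hn => by field_simp
  have hlim := ((((tendsto_log_factorial_sub_mul_log_div (fun n => le_rfl) hn1).sub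
      (tendsto_log_factorial_sub_mul_log_div (fun n => by have := hab n; omega) hax)).sub
      (tendsto_log_factorial_sub_mul_log_div (fun n => by have := hab n; omega) hby)).sub
      (tendsto_log_factorial_sub_mul_log_div (fun n => (Nat.sub_le _ _).trans (Nat.sub_le _ _))
        hcz)).add
    (((hax.mul_const (log p₀)).add (hby.mul_const (log p₁))).add (hcz.mul_const (log p₂)))
  convert hlim.congr' ?_ using 2
  · rw [mul_log_div _ hp₀.ne', mul_log_div _ hp₁.ne', mul_log_div _ hp₂.ne', log_one]
    ring
  · filter_upwards [eventually_ne_atTop 0] with n hn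
    rw [log_trinomial_prob (hab n) hp₀ hp₁ hp₂]
    field_simp
    linear_combination (log n) * hsum n

theorem tendsto_nat_floor_natCast_mul_div {x : ℝ} (hx : 0 ≤ x) :
    Tendsto (fun n : ℕ => (⌊(n : ℝ) * x⌋₊ : ℝ) / n) atTop (𝓝 x) := by
  simpa only [mul_comm x, Function.comp_def] using
    (tendsto_nat_floor_mul_div_atTop hx).comp (tendsto_natCast_atTop_atTop (R := ℝ))

theorem Nat.floor_mul_add_floor_mul_le {x y : ℝ} (hx : 0 ≤ x) (hy : 0 ≤ y) (hxy : x + y ≤ 1)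
    (n : ℕ) : ⌊(n : ℝ) * x⌋₊ + ⌊(n : ℝ) * y⌋₊ ≤ n := by
  have h₀ : (⌊(n : ℝ) * x⌋₊ : ℝ) ≤ n * x := Nat.floor_le (by positivity)
  have h₁ : (⌊(n : ℝ) * y⌋₊ : ℝ) ≤ n * y := Nat.floor_le (by positivity)
  have : ((⌊(n : ℝ) * x⌋₊ + ⌊(n : ℝ) * y⌋₊ : ℕ) : ℝ) ≤ n := by
    push_cast
    nlinarith [mul_nonneg (Nat.cast_nonneg (α := ℝ) n) (sub_nonneg.mpr hxy)]
  exact_mod_cast this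

theorem stmt9 (p₀ p₁ : ℝ) (hp₀ : 0 < p₀) (hp₁ : 0 < p₁) (hp : p₀ + p₁ < 1)
    (x y : ℝ) (hx : 0 ≤ x) (hy : 0 ≤ y) (hxy : x + y ≤ 1) :
    Filter.Tendsto (fun n : ℕ =>
      (n : ℝ)⁻¹ * Real.log
        ((n.choose ⌊(n : ℝ) * x⌋₊ : ℝ)
          * ((n - ⌊(n : ℝ) * x⌋₊).choose ⌊(n : ℝ) * y⌋₊ : ℝ)
          * p₀ ^ ⌊(n : ℝ) * x⌋₊ * p₁ ^ ⌊(n : ℝ) * y⌋₊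
          * (1 - p₀ - p₁) ^ (n - ⌊(n : ℝ) * x⌋₊ - ⌊(n : ℝ) * y⌋₊)))
      Filter.atTop
      (nhds (-(x * Real.log (x / p₀) + y * Real.log (y / p₁)
        + (1 - x - y) * Real.log ((1 - x - y) / (1 - p₀ - p₁))))) :=
  tendsto_log_trinomial_prob_div hp₀ hp₁ (by linarith) (Nat.floor_mul_add_floor_mul_le hx hy hxy)
    (tendsto_nat_floor_natCast_mul_div hx) (tendsto_nat_floor_natCast_mul_div hy)
end

section
/- Let μ₁, μ₂ > 0, l₁ = (0,−1)ᵀ, l₂ = (−1,1)ᵀ, and v ∈ ℝ². If sup over θ ∈ ℝ² of [θ·v − (e^{θ·l₁} − 1)μ₁ − (e^{θ·l₂} − 1)μ₂] is finite, then there exist h₁, h₂ ≥ 0 such that v = h₁μ₁l₁ + h₂μ₂l₂, i.e., the first coordinate of v is ≤ 0 and the sum of the two coordinates of v is ≤ 0. -/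
/-! The exponential terms stay bounded along the rays `θ = (t, 0)` and `θ = (t, t)`, `t ≥ 0`,
which are orthogonal to one jump direction and make an obtuse angle with the other. Along them the
supremum therefore grows like `t v₁` and `t (v₁ + v₂)`, so both must be nonpositive; the
coefficients `h₁, h₂` are then read off from the linear system. -/

open Real

lemma nonpos_of_forall_nonneg_mul_le {α : Type*} [Field α] [LinearOrder α] [IsStrictOrderedRing α]
    {c M : α} (h : ∀ t, 0 ≤ t → t * c ≤ M) : c ≤ 0 := by
  by_contra! hc
  have hM := h ((|M| + 1) / c) (by positivity)
  rw [div_mul_cancel₀ _ hc.ne'] at hM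
  linarith [le_abs_self M]

lemma nonpos_of_forall_nonneg_mul_sub_exp_le {c μ M : ℝ} (hμ : 0 ≤ μ)
    (h : ∀ t, 0 ≤ t → t * c - (exp (-t) - 1) * μ ≤ M) : c ≤ 0 := by
  refine nonpos_of_forall_nonneg_mul_le (M := M) fun t ht => ?_
  have hexp : exp (-t) ≤ 1 := exp_le_one_iff.mpr (neg_nonpos.mpr ht)
  nlinarith [h t ht]

theorem stmt14 (μ₁ μ₂ : ℝ) (hμ₁ : 0 < μ₁) (hμ₂ : 0 < μ₂) (v : ℝ × ℝ)
    (hbdd : BddAbove (Set.range fun θ : ℝ × ℝ =>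
      θ.1 * v.1 + θ.2 * v.2 - (Real.exp (-θ.2) - 1) * μ₁
        - (Real.exp (θ.2 - θ.1) - 1) * μ₂)) :
    ∃ h₁ h₂ : ℝ, 0 ≤ h₁ ∧ 0 ≤ h₂ ∧
      v = (-(h₂ * μ₂), -(h₁ * μ₁) + h₂ * μ₂) ∧ v.1 ≤ 0 ∧ v.1 + v.2 ≤ 0 := by
  obtain ⟨M, hM⟩ := hbdd
  have hv₁ : v.1 ≤ 0 := nonpos_of_forall_nonneg_mul_sub_exp_le hμ₂.le fun t _ => by
    simpa using hM ⟨(t, 0), rfl⟩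
  have hv₁₂ : v.1 + v.2 ≤ 0 := nonpos_of_forall_nonneg_mul_sub_exp_le hμ₁.le fun t _ => by
    simpa [mul_add] using hM ⟨(t, t), rfl⟩
  refine ⟨-(v.1 + v.2) / μ₁, -v.1 / μ₂, div_nonneg (by linarith) hμ₁.le,
    div_nonneg (by linarith) hμ₂.le, ?_, hv₁, hv₁₂⟩
  ext <;> field_simp; ring
end
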